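/- For all integers k ≥ 3 and l ≥ 1 with k − l ≠ 2 the following identity holds in F: Λch(k)·S̄ch(l) = R·y^{k−4}·(x₁x₂x₃)^{1−l}·a(l−1,l−1,0)/Π + R·y^{k−3}·(x₁x₂x₃)^{−l}·a(l,l,0)/Π. (This is the character form of the splitting Λ_k⊗S_l* ≅ Im d_{k−1,l−1} ⊕ Im d_{k,l} coming from exactness of the Koszul complex for the (3|1)-dimensional super vector space.) -/

import Mathlib

/-!
For `k ≥ 3` all four terms of `Λch(k)` occur and it factors as `y^{k-3}·R`.
Dividing the alternant identity `Π·hₙ = det (xᵢ^{n+2}, xᵢ, 1)` by `(x₁x₂x₃)^{n+2}` after inverting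
the variables gives `a(n,n,0) = (x₁x₂x₃)ⁿ·Π·h̄ₙ`, so the right side collapses to
`R·y^{k-3}·(h̄_l + y⁻¹·h̄_{l-1}) = Λch(k)·S̄ch(l)`.
-/

noncomputable section

/-- The field of rational functions over ℚ in four variables. -/
abbrev F : Type := FractionRing (MvPolynomial (Fin 4) ℚ)

def x1 : F := algebraMap (MvPolynomial (Fin 4) ℚ) F (MvPolynomial.X 0)
def x2 : F := algebraMap (MvPolynomial (Fin 4) ℚ) F (MvPolynomial.X 1)
def x3 : F := algebraMap (MvPolynomial (Fin 4) ℚ) F (MvPolynomial.X 2)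
def y  : F := algebraMap (MvPolynomial (Fin 4) ℚ) F (MvPolynomial.X 3)

/-- `R = (x₁+y)(x₂+y)(x₃+y)`. -/
def R : F := (x1 + y) * (x2 + y) * (x3 + y)

/-- `Π = (x₁−x₂)(x₂−x₃)(x₁−x₃)`. -/
def P : F := (x1 - x2) * (x2 - x3) * (x1 - x3)

/-- `a(t,u,v)` : determinant of the 3×3 matrix with `i`-th row `(xᵢ^{t+2}, xᵢ^{u+1}, xᵢ^v)`. -/
def a (t u v : ℤ) : F :=
  Matrix.det !![x1 ^ (t+2), x1 ^ (u+1), x1 ^ v;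
                x2 ^ (t+2), x2 ^ (u+1), x2 ^ v;
                x3 ^ (t+2), x3 ^ (u+1), x3 ^ v]

/-- Complete homogeneous symmetric polynomial of degree `k` in three variables
(`0` for `k < 0`). -/
def hc (u v w : F) (k : ℤ) : F :=
  if k < 0 then 0
  else ∑ i ∈ Finset.range (k.toNat + 1), ∑ j ∈ Finset.range (k.toNat - i + 1),
    u ^ i * v ^ j * w ^ (k.toNat - i - j)

def h (k : ℤ) : F := hc x1 x2 x3 k

def hbar (k : ℤ) : F := hc x1⁻¹ x2⁻¹ x3⁻¹ k

/-- Elementary symmetric polynomials in `x₁, x₂, x₃`. -/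
def e : ℕ → F
  | 0 => 1
  | 1 => x1 + x2 + x3
  | 2 => x1*x2 + x1*x3 + x2*x3
  | 3 => x1*x2*x3
  | _ => 0

/-- Character of the `j`-th super exterior power `Λ_j`. -/
def lamCh (j : ℕ) : F := ∑ r ∈ Finset.range (min 3 j + 1), e r * y ^ (j - r)

/-- Character of the dual `S_j*` of the `j`-th super symmetric power. -/
def sBarCh (j : ℕ) : F := hbar j + y⁻¹ * hbar ((j : ℤ) - 1)

/-- Schur polynomial: `s_μ · Π = det (xᵢ^{μⱼ+3−j})`. -/
def schur (m1 m2 m3 : ℤ) : F := a m1 m2 m3 / P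

lemma algebraMap_X_injective :
    Function.Injective fun i : Fin 4 ↦ algebraMap (MvPolynomial (Fin 4) ℚ) F (MvPolynomial.X i) :=
  (IsFractionRing.injective (MvPolynomial (Fin 4) ℚ) F).comp MvPolynomial.X_injective

lemma algebraMap_X_ne_zero (i : Fin 4) :
    algebraMap (MvPolynomial (Fin 4) ℚ) F (MvPolynomial.X i) ≠ 0 :=
  (map_ne_zero_iff _ (IsFractionRing.injective _ _)).mpr (MvPolynomial.X_ne_zero i)

lemma x1_ne_zero : x1 ≠ 0 := algebraMap_X_ne_zero 0
lemma x2_ne_zero : x2 ≠ 0 := algebraMap_X_ne_zero 1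
lemma x3_ne_zero : x3 ≠ 0 := algebraMap_X_ne_zero 2
lemma y_ne_zero : y ≠ 0 := algebraMap_X_ne_zero 3

lemma P_ne_zero : P ≠ 0 := by
  have hx (i j : Fin 4) (hij : i ≠ j) :
      algebraMap (MvPolynomial (Fin 4) ℚ) F (MvPolynomial.X i)
        - algebraMap (MvPolynomial (Fin 4) ℚ) F (MvPolynomial.X j) ≠ 0 :=
    sub_ne_zero.mpr (algebraMap_X_injective.ne hij)
  exact mul_ne_zero (mul_ne_zero (hx 0 1 (by decide)) (hx 1 2 (by decide))) (hx 0 2 (by decide))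

lemma hc_natCast (u v w : F) (n : ℕ) :
    hc u v w n = ∑ i ∈ Finset.range (n + 1),
      u ^ i * ∑ j ∈ Finset.range (n + 1 - i), v ^ j * w ^ (n + 1 - i - 1 - j) := by
  rw [hc, if_neg (by omega), Int.toNat_natCast]
  refine Finset.sum_congr rfl fun i hi ↦ ?_
  rw [Finset.mul_sum, show n + 1 - i = n - i + 1 by grind]
  refine Finset.sum_congr rfl fun j _ ↦ ?_
  rw [show n - i + 1 - 1 - j = n - i - j by omega]
  ring

lemma sub_mul_hc (u v w : F) (n : ℕ) :
    (v - w) * hc u v w n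
      = ∑ i ∈ Finset.range (n + 2), u ^ i * v ^ (n + 2 - 1 - i)
        - ∑ i ∈ Finset.range (n + 2), u ^ i * w ^ (n + 2 - 1 - i) := by
  rw [Finset.sum_range_succ _ (n + 1), Finset.sum_range_succ _ (n + 1), hc_natCast,
    Finset.mul_sum, show n + 2 - 1 - (n + 1) = 0 by omega, pow_zero, pow_zero,
    add_sub_add_right_eq_sub, ← Finset.sum_sub_distrib]
  refine Finset.sum_congr rfl fun i _ ↦ ?_
  rw [mul_left_comm, mul_comm (v - w), geom_sum₂_mul, show n + 2 - 1 - i = n + 1 - i by omega]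
  ring

-- The right side is the alternant `det (uᵢ^{n+2}, uᵢ, 1)`.
lemma vandermonde_mul_hc (u v w : F) (n : ℕ) :
    (u - v) * (v - w) * (u - w) * hc u v w n
      = (v - w) * u ^ (n + 2) + (w - u) * v ^ (n + 2) + (u - v) * w ^ (n + 2) := by
  have huv := geom_sum₂_mul u v (n + 2)
  have huw := geom_sum₂_mul u w (n + 2)
  linear_combination (u - v) * (u - w) * sub_mul_hc u v w n + (u - w) * huv - (u - v) * huw

lemma a_natCast (n : ℕ) : a n n 0 = (x1 * x2 * x3) ^ n * P * hbar n := by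
  have hdet : a n n 0 = (x1 * x2) ^ (n + 1) * (x1 - x2) + (x1 * x3) ^ (n + 1) * (x3 - x1)
      + (x2 * x3) ^ (n + 1) * (x2 - x3) := by
    rw [a, Matrix.det_fin_three]
    simp only [Matrix.of_apply, Matrix.cons_val', Matrix.cons_val_zero, Matrix.cons_val_one,
      Matrix.cons_val_two, Matrix.head_cons, Matrix.tail_cons, Matrix.empty_val',
      Matrix.cons_val_fin_one, Matrix.head_fin_const, zpow_zero]
    rw [show (n : ℤ) + 2 = (n + 2 : ℕ) by push_cast; ring,
      show (n : ℤ) + 1 = (n + 1 : ℕ) by push_cast; ring]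
    simp only [zpow_natCast]
    ring
  have hvdm := vandermonde_mul_hc x1⁻¹ x2⁻¹ x3⁻¹ n
  rw [← hbar] at hvdm
  rw [hdet, P]
  generalize hbar n = H at hvdm ⊢
  have h1 := x1_ne_zero
  have h2 := x2_ne_zero
  have h3 := x3_ne_zero
  simp only [inv_pow] at hvdm
  field_simp at hvdm
  refine mul_left_cancel₀ (pow_ne_zero 2 (mul_ne_zero (mul_ne_zero h1 h2) h3)) ?_
  linear_combination hvdm

lemma lamCh_add_three (m : ℕ) : lamCh (m + 3) = y ^ m * R := by
  rw [lamCh, show min 3 (m + 3) = 3 by omega]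
  simp only [Finset.sum_range_succ, Finset.sum_range_zero, e, R,
    show m + 3 - 1 = m + 2 by omega, show m + 3 - 2 = m + 1 by omega, Nat.add_sub_cancel,
    Nat.sub_zero]
  ring

theorem stmt_11_general (k l : ℕ) (hk : 3 ≤ k) (hl : 1 ≤ l) :
    lamCh k * sBarCh l
    = R * y ^ ((k : ℤ) - 4) * (x1*x2*x3) ^ (1 - (l : ℤ)) * a ((l : ℤ) - 1) ((l : ℤ) - 1) 0 / P
      + R * y ^ ((k : ℤ) - 3) * (x1*x2*x3) ^ (-(l : ℤ)) * a l l 0 / P := by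
  obtain ⟨m, rfl⟩ : ∃ m, k = m + 3 := ⟨k - 3, by omega⟩
  obtain ⟨n, rfl⟩ : ∃ n, l = n + 1 := ⟨l - 1, by omega⟩
  rw [sBarCh, show ((m + 3 : ℕ) : ℤ) - 4 = m - 1 by push_cast; ring,
    show ((m + 3 : ℕ) : ℤ) - 3 = m by push_cast; ring,
    show 1 - ((n + 1 : ℕ) : ℤ) = -n by push_cast; ring,
    show ((n + 1 : ℕ) : ℤ) - 1 = n by push_cast; ring,
    lamCh_add_three, a_natCast, a_natCast, zpow_sub_one₀ y_ne_zero]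
  simp only [zpow_neg, zpow_natCast]
  have := P_ne_zero
  have := mul_ne_zero (mul_ne_zero x1_ne_zero x2_ne_zero) x3_ne_zero
  field_simp
  ring

/-- Character form of the splitting `Λ_k⊗S_l* ≅ Im d_{k−1,l−1} ⊕ Im d_{k,l}`
(`k ≥ 3`, `l ≥ 1`, `k−l ≠ 2`). -/
theorem stmt_11 (k l : ℕ) (hk : 3 ≤ k) (hl : 1 ≤ l) (hkl : (k : ℤ) - l ≠ 2) :
    lamCh k * sBarCh l
    = R * y ^ ((k : ℤ) - 4) * (x1*x2*x3) ^ (1 - (l : ℤ)) * a ((l : ℤ) - 1) ((l : ℤ) - 1) 0 / P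
      + R * y ^ ((k : ℤ) - 3) * (x1*x2*x3) ^ (-(l : ℤ)) * a l l 0 / P :=
  stmt_11_general k l hk hl
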